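/- If the subshifts Σ and Σ' are topologically conjugate (i.e., there is a homeomorphism between them commuting with the shifts), then h_𝒞(Σ) = h_𝒞(Σ') and h*_𝒞(Σ) = h*_𝒞(Σ'). In particular the left constraint entropy, the extendable left constraint entropy, and their symmetric versions are invariants of topological conjugacy. -/

import Mathlib

open Filter Set MeasureTheory

namespace QFTPaper

variable {A : Type*} {B : Type*}

/-- The left shift on bi-infinite sequences over the alphabet `A`. -/
def shift (x : ℤ → A) : ℤ → A := fun n => x (n + 1)

/-- A subshift: a closed, shift-invariant subset of `A^ℤ`. -/
def IsSubshift [TopologicalSpace A] (X : Set (ℤ → A)) : Prop :=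
  IsClosed X ∧ shift '' X = X

/-- The finite word `w` occurs in `x` at position `k`. -/
def OccursAt (w : List A) (x : ℤ → A) (k : ℤ) : Prop :=
  ∀ i : Fin w.length, x (k + (i : ℕ)) = w.get i

/-- The language of `X`: words of length `n` occurring in elements of `X`
(at position `0`, which is no restriction by shift-invariance). -/
def Lang (X : Set (ℤ → A)) (n : ℕ) : Set (List A) :=
  { w | w.length = n ∧ ∃ x ∈ X, OccursAt w x 0 }

/-- Topological entropy of a subshift. -/
noncomputable def hTop (X : Set (ℤ → A)) : ℝ :=
  limsup (fun n : ℕ => Real.log (Nat.card ↥(Lang X n)) / (n : ℝ)) atTop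

/-- Follower set of the finite word `w = A₋ₙ…A₀` (listed from `A₋ₙ` to `A₀`):
the set of one-sided sequences `B₀B₁B₂…` with `B ∈ X` and `B₋ₙ…B₀ = A₋ₙ…A₀`,
realized by requiring `w` to occur in `B` at positions `0,…,n` and reading off
the tail of `B` starting at the position of the last letter of `w`.
For the empty word this gives `X₊` (by shift-invariance). -/
def fol (X : Set (ℤ → A)) (w : List A) : Set (ℕ → A) :=
  { y | ∃ B ∈ X, (∀ i : Fin w.length, B ((i : ℕ) : ℤ) = w.get i) ∧
        ∀ k : ℕ, y k = B ((w.length : ℤ) - 1 + (k : ℤ)) }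

/-- `w = A₋ₙ…A₀` is a left constraint:
`∅ ≠ fol(A₋ₙ…A₀) ⊊ fol(A₋ₙ₊₁…A₀)`. -/
def IsLeftConstraint (X : Set (ℤ → A)) (w : List A) : Prop :=
  w ≠ [] ∧ fol X w ≠ ∅ ∧ fol X w ⊂ fol X w.tail

/-- `𝒞(X, n)`: the set of left constraints of length `n`. -/
def LC (X : Set (ℤ → A)) (n : ℕ) : Set (List A) :=
  { w | w.length = n ∧ IsLeftConstraint X w }

/-- The left constraint entropy `h_𝒞(X) = limsup (1/n) log⁺ #𝒞(X,n)`. -/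
noncomputable def hC (X : Set (ℤ → A)) : ℝ :=
  limsup (fun n : ℕ => max 0 (Real.log (Nat.card ↥(LC X n))) / (n : ℝ)) atTop

/-- The time-reversed subshift `X̄`. -/
def rev (X : Set (ℤ → A)) : Set (ℤ → A) :=
  (fun x : ℤ → A => fun n : ℤ => x (-n)) '' X

/-- The symmetric constraint entropy `h_𝒮𝒞(X) = min (h_𝒞(X), h_𝒞(X̄))`. -/
noncomputable def hSC (X : Set (ℤ → A)) : ℝ := min (hC X) (hC (rev X))

/-- Subshift of quasi-finite type: `h_𝒮𝒞(X) < h_top(X)`. -/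
def IsQFT [TopologicalSpace A] (X : Set (ℤ → A)) : Prop :=
  IsSubshift X ∧ hSC X < hTop X

/-- The word `B₋ₘ…B₀` read off from a one-sided past `b` (where `b j = B₋ⱼ`). -/
def wordOf (b : ℕ → A) (m : ℕ) : List A :=
  (List.range (m + 1)).map fun j => b (m - j)

/-- An extendable left constraint: a left constraint `A₋ₙ…A₀` which admits a
one-sided past `B` extending it such that `B₋ₘ…B₀` is again a left constraint
for infinitely many `m`. -/
def IsExtendable (X : Set (ℤ → A)) (w : List A) : Prop :=
  IsLeftConstraint X w ∧
  ∃ b : ℕ → A, wordOf b (w.length - 1) = w ∧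
    ∀ N : ℕ, ∃ m, N ≤ m ∧ IsLeftConstraint X (wordOf b m)

/-- `𝒞*(X, n)`: the set of extendable left constraints of length `n`. -/
def ELC (X : Set (ℤ → A)) (n : ℕ) : Set (List A) :=
  { w | w.length = n ∧ IsExtendable X w }

/-- The extendable left constraint entropy `h*_𝒞(X)`. -/
noncomputable def hCstar (X : Set (ℤ → A)) : ℝ :=
  limsup (fun n : ℕ => Real.log (Nat.card ↥(ELC X n)) / (n : ℝ)) atTop

/-- `h*_𝒮𝒞(X) = min (h*_𝒞(X), h*_𝒞(X̄))`. -/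
noncomputable def hSCstar (X : Set (ℤ → A)) : ℝ := min (hCstar X) (hCstar (rev X))

/-- Subshift of weak quasi-finite type: `h*_𝒮𝒞(X) < h_top(X)`. -/
def IsWeakQFT [TopologicalSpace A] (X : Set (ℤ → A)) : Prop :=
  IsSubshift X ∧ hSCstar X < hTop X

/-- Subshift of finite type: defined by excluding a finite set of finite words. -/
def IsSFT (X : Set (ℤ → A)) : Prop :=
  ∃ F : Finset (List A), X = { x | ∀ w ∈ F, ∀ k : ℤ, ¬ OccursAt w x k }

/-- Sofic subshift: the image of an SFT under a continuous shift-commuting map. -/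
def IsSofic [TopologicalSpace A] (X : Set (ℤ → A)) : Prop :=
  ∃ (B : Type) (_ : Fintype B) (Y : Set (ℤ → B)) (π : (ℤ → B) → (ℤ → A)),
    IsSFT Y ∧
    (letI : TopologicalSpace B := ⊥
     Continuous π) ∧
    (∀ x : ℤ → B, π (shift x) = shift (π x)) ∧ π '' Y = X

/-- Topological conjugacy of subshifts: a homeomorphism commuting with the shifts. -/
def Conjugate [TopologicalSpace A] [TopologicalSpace B]
    (X : Set (ℤ → A)) (Y : Set (ℤ → B)) : Prop :=
  ∃ φ : X ≃ₜ Y, ∀ x x' : X, (x' : ℤ → A) = shift (x : ℤ → A) →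
    (φ x' : ℤ → B) = shift (φ x : ℤ → B)

/-- The cylinder of a word of length `n` placed at positions `0,…,n-1`. -/
def cylSet (n : ℕ) (w : Fin n → A) : Set (ℤ → A) :=
  { x | ∀ i : Fin n, x ((i : ℕ) : ℤ) = w i }

/-- Entropy of the partition of `A^ℤ` into cylinders of length `n`. -/
noncomputable def blockEntropy [Fintype A] [MeasurableSpace A]
    (μ : Measure (ℤ → A)) (n : ℕ) : ℝ :=
  ∑ w : Fin n → A, Real.negMulLog ((μ (cylSet n w)).toReal)

/-- Kolmogorov–Sinai entropy of a shift-invariant measure on `A^ℤ`,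
computed with the natural (generating) partition into cylinders. -/
noncomputable def KSEntropy [Fintype A] [MeasurableSpace A]
    (μ : Measure (ℤ → A)) : ℝ :=
  ⨅ n : ℕ, blockEntropy μ (n + 1) / (n + 1)

/-- A maximum measure: an ergodic shift-invariant Borel probability measure
carried by `X` whose Kolmogorov–Sinai entropy equals the topological entropy of `X`. -/
def IsMaxMeasure [Fintype A] [MeasurableSpace A]
    (X : Set (ℤ → A)) (μ : Measure (ℤ → A)) : Prop :=
  IsProbabilityMeasure μ ∧ μ Xᶜ = 0 ∧ Ergodic shift μ ∧ KSEntropy μ = hTop X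

/-- The number of points of `X` fixed by the `n`-th power of the shift. -/
noncomputable def perCount (X : Set (ℤ → A)) (n : ℕ) : ℕ :=
  Nat.card {x : ℤ → A | x ∈ X ∧ shift^[n] x = x}

/-!
By the Curtis–Hedlund–Lyndon theorem a conjugacy and its inverse are sliding block codes `f`, `g`
of some radius `r`. Let `v` be a left constraint of `Y` of length `n`, realised by a point `y`.
The past of `g y` beyond position `-r` depends only on the past of `y`. If none of its words of
length between `n - 2r` and `n` were a left constraint of `X`, all these words would have the
same follower set; splicing the past of `g y` with the future of `g y'`, where `y'` witnesses
that `v` is a left constraint, and applying `f` would give a point ending with `v` and having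
the future of `y'`, which is impossible. Since `v` is determined by that word together with its
`4r + 2` boundary letters, `#𝒞(Y, n) ≤ K · #𝒞(X, m)` for some `m ∈ [n - 2r - 1, n]`, whence
`h_𝒞(Y) ≤ h_𝒞(X)`. For extendable constraints, compactness gives a single point `y` whose past
carries all the left constraints `B₋ₘ…B₀` of an extension, and they are all pushed into the past
of the same point `g y`. Symmetry of conjugacy and time reversal give the remaining equalities.
-/

def shiftBy (k : ℤ) (x : ℤ → A) : ℤ → A := fun n => x (n + k)

@[simp]
lemma shiftBy_apply (k : ℤ) (x : ℤ → A) (n : ℤ) : shiftBy k x n = x (n + k) := rfl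

lemma shiftBy_shiftBy (a b : ℤ) (x : ℤ → A) : shiftBy a (shiftBy b x) = shiftBy (a + b) x := by
  funext n
  simp [add_assoc]

@[simp]
lemma shiftBy_zero (x : ℤ → A) : shiftBy 0 x = x := by
  funext n
  simp

lemma shiftBy_one : shiftBy 1 = (shift : (ℤ → A) → ℤ → A) := rfl

section Subshift

variable [TopologicalSpace A] {X : Set (ℤ → A)}

lemma IsSubshift.shift_mem (hX : IsSubshift X) {x : ℤ → A} (hx : x ∈ X) : shift x ∈ X :=
  hX.2 ▸ mem_image_of_mem shift hx

lemma IsSubshift.shiftBy_mem (hX : IsSubshift X) (k : ℤ) {x : ℤ → A} (hx : x ∈ X) :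
    shiftBy k x ∈ X := by
  induction k using Int.induction_on with
  | zero => simpa using hx
  | succ n ih =>
    rw [add_comm, ← shiftBy_shiftBy, shiftBy_one]
    exact hX.shift_mem ih
  | pred n ih =>
    obtain ⟨w, hw, hwx⟩ : shiftBy (-n) x ∈ shift '' X := hX.2.symm ▸ ih
    rw [sub_eq_neg_add, ← shiftBy_shiftBy, ← hwx, ← shiftBy_one, shiftBy_shiftBy]
    simpa using hw

lemma IsSubshift.image_shiftBy (hX : IsSubshift X) (k : ℤ) : shiftBy k '' X = X := by
  refine (image_subset_iff.2 fun x hx => hX.shiftBy_mem k hx).antisymm fun x hx => ?_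
  exact ⟨shiftBy (-k) x, hX.shiftBy_mem _ hx, by simp [shiftBy_shiftBy]⟩

lemma map_shiftBy_of_map_shift (hX : IsSubshift X) {f : (ℤ → A) → ℤ → B}
    (hf : ∀ x ∈ X, f (shift x) = shift (f x)) (k : ℤ) {x : ℤ → A} (hx : x ∈ X) :
    f (shiftBy k x) = shiftBy k (f x) := by
  induction k using Int.induction_on with
  | zero => simp
  | succ n ih =>
    rw [add_comm, ← shiftBy_shiftBy, ← shiftBy_shiftBy, shiftBy_one, ← ih]
    exact hf _ (hX.shiftBy_mem _ hx)
  | pred n ih =>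
    have h := hf _ (hX.shiftBy_mem (-n - 1) hx)
    rw [← shiftBy_one, shiftBy_shiftBy, show (1 : ℤ) + (-n - 1) = -n by ring, ih] at h
    calc f (shiftBy (-n - 1) x) = shiftBy (-1) (shift (f (shiftBy (-n - 1) x))) := by
          simp [← shiftBy_one, shiftBy_shiftBy]
      _ = shiftBy (-n - 1) (f x) := by rw [← h, shiftBy_shiftBy]; ring_nf

end Subshift

def EndsAtZero (w : List A) (x : ℤ → A) : Prop :=
  ∀ i (hi : i < w.length), x (i + 1 - w.length) = w[i]

lemma EndsAtZero.tail {w : List A} {x : ℤ → A} (h : EndsAtZero w x) : EndsAtZero w.tail x := by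
  intro i hi
  rw [List.length_tail] at hi
  rw [List.getElem_tail, ← h (i + 1) (by omega)]
  congr 1
  push_cast [List.length_tail, Nat.cast_sub (by omega : 1 ≤ w.length)]
  ring

lemma EndsAtZero.congr {w : List A} {x x' : ℤ → A} (h : EndsAtZero w x)
    (hxx' : EqOn x x' (Icc (1 - w.length) 0)) : EndsAtZero w x' := by
  intro i hi
  rw [← h i hi, hxx' ⟨by omega, by omega⟩]

lemma EndsAtZero.eqOn {w : List A} {x x' : ℤ → A} (h : EndsAtZero w x) (h' : EndsAtZero w x') :
    EqOn x x' (Icc (1 - w.length) 0) := by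
  intro p hp
  obtain ⟨i, rfl⟩ : ∃ i : ℕ, p = i + 1 - w.length := ⟨(p + w.length - 1).toNat, by grind⟩
  rw [h i (by grind), h' i (by grind)]

lemma wordOf_length (b : ℕ → A) (m : ℕ) : (wordOf b m).length = m + 1 := by
  simp [wordOf]

lemma wordOf_ne_nil (b : ℕ → A) (m : ℕ) : wordOf b m ≠ [] :=
  List.ne_nil_of_length_pos (by simp [wordOf_length])

lemma wordOf_getElem (b : ℕ → A) (m i : ℕ) (hi : i < (wordOf b m).length) :
    (wordOf b m)[i] = b (m - i) := by
  simp [wordOf]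

lemma wordOf_tail (b : ℕ → A) (m : ℕ) : (wordOf b (m + 1)).tail = wordOf b m := by
  apply List.ext_getElem (by simp [wordOf_length])
  intro i _ _
  simp only [List.getElem_tail, wordOf_getElem]
  congr 1
  omega

lemma endsAtZero_wordOf_iff {b : ℕ → A} {m : ℕ} {x : ℤ → A} :
    EndsAtZero (wordOf b m) x ↔ ∀ k ≤ m, x (-k) = b k := by
  simp only [EndsAtZero, wordOf_length, wordOf_getElem]
  constructor
  · intro h k hk
    have := h (m - k) (by omega)
    rwa [show ((m - k : ℕ) : ℤ) + 1 - (m + 1 : ℕ) = -k by omega,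
      show m - (m - k) = k by omega] at this
  · intro h i hi
    rw [show (i : ℤ) + 1 - (m + 1 : ℕ) = -((m - i : ℕ) : ℤ) by omega]
    exact h _ (by omega)

lemma eq_of_take_eq_of_drop_eq {α : Type*} {l l' : List α} (hlen : l.length = l'.length)
    {a b : ℕ} (htake : l.take a = l'.take a) (hdrop : l.drop b = l'.drop b)
    (hmid : ∀ i (hi : i < l.length) (hi' : i < l'.length), a ≤ i → i < b → l[i] = l'[i]) :
    l = l' := by
  refine List.ext_getElem hlen fun i hi hi' => ?_
  suffices l[i]? = l'[i]? by
    simpa [List.getElem?_eq_getElem hi, List.getElem?_eq_getElem hi'] using this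
  by_cases hia : i < a
  · simpa [List.getElem_take, hia] using congrArg (·[i]?) htake
  by_cases hib : b ≤ i
  · simpa [List.getElem?_drop, Nat.add_sub_cancel' hib] using congrArg (·[i - b]?) hdrop
  rw [List.getElem?_eq_getElem hi, List.getElem?_eq_getElem hi',
    hmid i hi hi' (by omega) (by omega)]

lemma apply_eq_of_wordOf_eq {b b' : ℕ → A} {M : ℕ} (h : wordOf b M = wordOf b' M) {k : ℕ}
    (hk : k ≤ M) : b k = b' k := by
  have := List.getElem_of_eq h (i := M - k) (by rw [wordOf_length]; omega)
  rw [wordOf_getElem, wordOf_getElem] at this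
  rwa [Nat.sub_sub_self hk] at this

lemma ncard_length_eq [Fintype A] (k : ℕ) :
    {l : List A | l.length = k}.ncard = Fintype.card A ^ k := by
  rw [← Nat.card_coe_set_eq]
  exact (Nat.card_eq_fintype_card (α := List.Vector A k)).trans (card_vector k)

lemma card_words_le [Fintype A] (P : List A → Prop) (m : ℕ) :
    Nat.card {w : List A | w.length = m ∧ P w} ≤ Fintype.card A ^ m := by
  rw [Nat.card_coe_set_eq, ← ncard_length_eq]
  exact ncard_le_ncard (fun w hw => hw.1) (List.finite_length_eq A m)

section FollowerSets

variable [TopologicalSpace A] {X : Set (ℤ → A)}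

lemma fol_eq (hX : IsSubshift X) (w : List A) :
    fol X w = {y | ∃ x ∈ X, EndsAtZero w x ∧ ∀ k : ℕ, y k = x k} := by
  ext y
  constructor
  · rintro ⟨x, hx, hw, hy⟩
    refine ⟨shiftBy (w.length - 1) x, hX.shiftBy_mem _ hx, fun i hi => ?_, fun k => ?_⟩
    · simpa using hw ⟨i, hi⟩
    · rw [hy, shiftBy_apply, add_comm]
  · rintro ⟨x, hx, hw, hy⟩
    refine ⟨shiftBy (1 - w.length) x, hX.shiftBy_mem _ hx, fun i => ?_, fun k => ?_⟩
    · rw [List.get_eq_getElem, ← hw i i.2, shiftBy_apply]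
      ring_nf
    · rw [hy, shiftBy_apply]
      ring_nf

lemma fol_nonempty_iff (hX : IsSubshift X) (w : List A) :
    (fol X w).Nonempty ↔ ∃ x ∈ X, EndsAtZero w x := by
  rw [fol_eq hX]
  constructor
  · rintro ⟨_, x, hx, hw, _⟩
    exact ⟨x, hx, hw⟩
  · rintro ⟨x, hx, hw⟩
    exact ⟨fun k => x k, x, hx, hw, fun _ => rfl⟩

lemma fol_subset_fol_tail (hX : IsSubshift X) (w : List A) : fol X w ⊆ fol X w.tail := by
  rw [fol_eq hX, fol_eq hX]
  rintro y ⟨x, hx, hw, hy⟩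
  exact ⟨x, hx, hw.tail, hy⟩

lemma IsLeftConstraint.exists_mem (hX : IsSubshift X) {w : List A}
    (h : IsLeftConstraint X w) : ∃ x ∈ X, EndsAtZero w x :=
  (fol_nonempty_iff hX w).1 (nonempty_iff_ne_empty.2 h.2.1)

lemma IsLeftConstraint.exists_mem_tail (hX : IsSubshift X) {w : List A}
    (h : IsLeftConstraint X w) :
    ∃ x ∈ X, EndsAtZero w.tail x ∧ ∀ u ∈ X, EndsAtZero w u → ¬ ∀ k : ℕ, u k = x k := by
  obtain ⟨y, hy, hyw⟩ := exists_of_ssubset h.2.2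
  rw [fol_eq hX] at hy hyw
  obtain ⟨x, hx, hxw, hyx⟩ := hy
  exact ⟨x, hx, hxw, fun u hu huw hux => hyw ⟨u, hu, huw, fun k => by rw [hyx, hux]⟩⟩

lemma fol_eq_fol_tail_of_not_isLeftConstraint (hX : IsSubshift X) {w : List A} (hw : w ≠ [])
    (hne : fol X w ≠ ∅) (h : ¬ IsLeftConstraint X w) : fol X w = fol X w.tail := by
  by_contra hneq
  exact h ⟨hw, hne, ssubset_iff_subset_ne.2 ⟨fol_subset_fol_tail hX w, hneq⟩⟩

lemma fol_wordOf_add_eq (hX : IsSubshift X) {b : ℕ → A} {x : ℤ → A} (hx : x ∈ X)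
    (hxb : ∀ k : ℕ, x (-k) = b k) {M J : ℕ}
    (h : ∀ j, 1 ≤ j → j ≤ J → ¬ IsLeftConstraint X (wordOf b (M + j))) :
    fol X (wordOf b (M + J)) = fol X (wordOf b M) := by
  induction J with
  | zero => rfl
  | succ J ih =>
    have hne : fol X (wordOf b (M + J + 1)) ≠ ∅ := by
      refine nonempty_iff_ne_empty.1 ((fol_nonempty_iff hX _).2 ⟨x, hx, ?_⟩)
      exact endsAtZero_wordOf_iff.2 fun k _ => hxb k
    rw [← add_assoc, fol_eq_fol_tail_of_not_isLeftConstraint hX (wordOf_ne_nil _ _) hne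
      (h (J + 1) le_add_self le_rfl), wordOf_tail, ih fun j hj hjJ => h j hj (by omega)]

end FollowerSets

def IsBlockCodeOn (r : ℕ) (f : (ℤ → A) → ℤ → B) (X : Set (ℤ → A)) : Prop :=
  ∀ x ∈ X, ∀ x' ∈ X, ∀ i : ℤ, EqOn x x' (Icc (i - r) (i + r)) → f x i = f x' i

lemma IsBlockCodeOn.mono {r s : ℕ} {f : (ℤ → A) → ℤ → B} {X : Set (ℤ → A)}
    (hf : IsBlockCodeOn r f X) (hrs : r ≤ s) : IsBlockCodeOn s f X :=
  fun x hx x' hx' i h => hf x hx x' hx' i (h.mono (Icc_subset_Icc (by omega) (by omega)))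

lemma IsBlockCodeOn.eqOn {r : ℕ} {f : (ℤ → A) → ℤ → B} {X : Set (ℤ → A)}
    (hf : IsBlockCodeOn r f X) {x x' : ℤ → A} (hx : x ∈ X) (hx' : x' ∈ X) {s t : Set ℤ}
    (hst : ∀ i ∈ s, Icc (i - r) (i + r) ⊆ t) (h : EqOn x x' t) : EqOn (f x) (f x') s :=
  fun i hi => hf x hx x' hx' i (h.mono (hst i hi))

section BlockCode

variable [TopologicalSpace A] [DiscreteTopology A]

/-- Uniform continuity of `q` on the compact set `X`. -/
lemma exists_radius_of_continuousOn [TopologicalSpace B] [DiscreteTopology B] {X : Set (ℤ → A)}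
    (hX : IsCompact X) {q : (ℤ → A) → B} (hq : ContinuousOn q X) :
    ∃ r : ℕ, ∀ x ∈ X, ∀ x' ∈ X, EqOn x x' (Icc (-r) r) → q x = q x' := by
  have hcyl : ∀ x ∈ X, ∃ n : ℕ, ∀ x' ∈ X, EqOn x x' (Icc (-n) n) → q x' = q x := by
    intro x hx
    obtain ⟨u, hu, hxu, huX⟩ := mem_nhdsWithin.1
      (hq x hx (isOpen_discrete {q x} |>.mem_nhds rfl))
    obtain ⟨I, t, ht, hIt⟩ := isOpen_pi_iff.1 hu x hxu
    refine ⟨I.sup Int.natAbs, fun x' hx' hxx' => huX ⟨hIt fun j hj => ?_, hx'⟩⟩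
    have hjI : j.natAbs ≤ I.sup Int.natAbs := Finset.le_sup (f := Int.natAbs) hj
    rw [← hxx' ⟨by omega, by omega⟩]
    exact (ht j hj).2
  choose! n hn using hcyl
  obtain ⟨T, hTX, hXT⟩ := hX.elim_nhds_subcover (fun x => (Icc (-n x : ℤ) (n x)).pi fun j => {x j})
    fun x _ => isOpen_set_pi (finite_Icc _ _) (fun _ _ => isOpen_discrete _) |>.mem_nhds
      fun _ _ => rfl
  refine ⟨T.sup n, fun x hx x' hx' hxx' => ?_⟩
  obtain ⟨x₀, hx₀T, hxx₀⟩ := mem_iUnion₂.1 (hXT hx)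
  have hn₀ : n x₀ ≤ T.sup n := Finset.le_sup hx₀T
  have hx₀x : EqOn x₀ x (Icc (-n x₀) (n x₀)) := fun j hj => (hxx₀ j hj).symm
  rw [hn x₀ (hTX x₀ hx₀T) x hx hx₀x, hn x₀ (hTX x₀ hx₀T) x' hx'
    (hx₀x.trans (hxx'.mono (Icc_subset_Icc (by omega) (by omega))))]

/-- Curtis–Hedlund–Lyndon. -/
lemma exists_isBlockCodeOn [Finite A] [TopologicalSpace B] [DiscreteTopology B]
    {X : Set (ℤ → A)} (hX : IsSubshift X) {f : (ℤ → A) → ℤ → B}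
    (hf : ∀ x ∈ X, f (shift x) = shift (f x)) (hcont : ContinuousOn (fun x => f x 0) X) :
    ∃ r, IsBlockCodeOn r f X := by
  obtain ⟨r, hr⟩ := exists_radius_of_continuousOn hX.1.isCompact hcont
  refine ⟨r, fun x hx x' hx' i hxx' => ?_⟩
  have h := hr _ (hX.shiftBy_mem i hx) _ (hX.shiftBy_mem i hx') fun t ht =>
    hxx' ⟨by simp at ht; omega, by simp at ht; omega⟩
  simpa [map_shiftBy_of_map_shift hX hf _ hx, map_shiftBy_of_map_shift hX hf _ hx'] using h

end BlockCode

lemma exists_mem_forall_apply_neg_eq [TopologicalSpace B] [CompactSpace B] [T2Space B]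
    {Y : Set (ℤ → B)} (hY : IsClosed Y) {b : ℕ → B}
    (hb : ∀ m : ℕ, ∃ y ∈ Y, ∀ k ≤ m, y (-k) = b k) : ∃ y ∈ Y, ∀ k : ℕ, y (-k) = b k := by
  set C : ℕ → Set (ℤ → B) := fun m => Y ∩ {y | ∀ k ≤ m, y (-(k : ℤ)) = b k}
  have hC : ∀ m, IsClosed (C m) := fun m => hY.inter <| by
    simp only [ofPred_forall]
    exact isClosed_biInter fun k _ => isClosed_eq (continuous_apply _) continuous_const
  obtain ⟨y, hy⟩ := IsCompact.nonempty_iInter_of_sequence_nonempty_isCompact_isClosed C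
    (fun m y hy => ⟨hy.1, fun k hk => hy.2 k (by omega)⟩) (fun m => hb m)
    (hC 0).isCompact hC
  rw [mem_iInter] at hy
  exact ⟨y, (hy 0).1, fun k => (hy k).2 k le_rfl⟩

section Extension

variable {X : Set (ℤ → A)} {Y : Set (ℤ → B)}

open Classical in
noncomputable def extendOn (φ : X → Y) (y₀ : ℤ → B) (x : ℤ → A) : ℤ → B :=
  if hx : x ∈ X then φ ⟨x, hx⟩ else y₀

lemma extendOn_of_mem (φ : X → Y) (y₀ : ℤ → B) {x : ℤ → A} (hx : x ∈ X) :
    extendOn φ y₀ x = φ ⟨x, hx⟩ :=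
  dif_pos hx

lemma mapsTo_extendOn (φ : X → Y) (y₀ : ℤ → B) : MapsTo (extendOn φ y₀) X Y :=
  fun x hx => by rw [extendOn_of_mem φ y₀ hx]; exact (φ _).2

lemma extendOn_shift [TopologicalSpace A] (hX : IsSubshift X) {φ : X → Y}
    (hφ : ∀ x x' : X, (x' : ℤ → A) = shift x → (φ x' : ℤ → B) = shift (φ x)) (y₀ : ℤ → B) :
    ∀ x ∈ X, extendOn φ y₀ (shift x) = shift (extendOn φ y₀ x) := fun x hx => by
  rw [extendOn_of_mem φ y₀ hx, extendOn_of_mem φ y₀ (hX.shift_mem hx)]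
  exact hφ ⟨x, hx⟩ _ rfl

lemma continuousOn_extendOn [TopologicalSpace A] [TopologicalSpace B] {φ : X → Y}
    (hφ : Continuous φ) (y₀ : ℤ → B) :
    ContinuousOn (fun x => extendOn φ y₀ x 0) X := by
  rw [continuousOn_iff_continuous_domRestrict]
  have h : X.domRestrict (fun x => extendOn φ y₀ x 0) = fun x => (φ x : ℤ → B) 0 :=
    funext fun x => by simp only [domRestrict_apply, extendOn_of_mem φ y₀ x.2]
  rw [h]
  exact (continuous_apply 0).comp (continuous_subtype_val.comp hφ)

end Extension

section Conjugacy

variable [TopologicalSpace A] [TopologicalSpace B] {X : Set (ℤ → A)} {Y : Set (ℤ → B)}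

lemma symm_map_shift (hX : IsSubshift X) {φ : X ≃ₜ Y}
    (hφ : ∀ x x' : X, (x' : ℤ → A) = shift x → (φ x' : ℤ → B) = shift (φ x)) :
    ∀ y y' : Y, (y' : ℤ → B) = shift y → (φ.symm y' : ℤ → A) = shift (φ.symm y) := by
  intro y y' hyy'
  have h : φ ⟨shift (φ.symm y), hX.shift_mem (φ.symm y).2⟩ = y' :=
    Subtype.ext (by rw [hφ (φ.symm y) _ rfl, φ.apply_symm_apply, hyy'])
  rw [← h, φ.symm_apply_apply]

lemma Conjugate.symm (hX : IsSubshift X) (h : Conjugate X Y) : Conjugate Y X :=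
  let ⟨φ, hφ⟩ := h
  ⟨φ.symm, symm_map_shift hX hφ⟩

end Conjugacy

structure BlockConjugacy (X : Set (ℤ → A)) (Y : Set (ℤ → B)) where
  f : (ℤ → A) → ℤ → B
  g : (ℤ → B) → ℤ → A
  r : ℕ
  mapsTo_f : MapsTo f X Y
  mapsTo_g : MapsTo g Y X
  f_g : ∀ y ∈ Y, f (g y) = y
  isBlockCodeOn_f : IsBlockCodeOn r f X
  isBlockCodeOn_g : IsBlockCodeOn r g Y

lemma Conjugate.exists_blockConjugacy [TopologicalSpace A] [TopologicalSpace B] [Finite A]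
    [Finite B] [DiscreteTopology A] [DiscreteTopology B] {X : Set (ℤ → A)} {Y : Set (ℤ → B)}
    (hX : IsSubshift X) (hY : IsSubshift Y) (h : Conjugate X Y) (hY₀ : Y.Nonempty) :
    Nonempty (BlockConjugacy X Y) := by
  obtain ⟨φ, hφ⟩ := h
  obtain ⟨y₀, hy₀⟩ := hY₀
  set x₀ : ℤ → A := ((φ.symm ⟨y₀, hy₀⟩ : X) : ℤ → A)
  obtain ⟨r₁, hr₁⟩ :=
    exists_isBlockCodeOn hX (extendOn_shift hX hφ y₀) (continuousOn_extendOn φ.continuous y₀)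
  obtain ⟨r₂, hr₂⟩ := exists_isBlockCodeOn hY (extendOn_shift hY (symm_map_shift hX hφ) x₀)
    (continuousOn_extendOn φ.symm.continuous x₀)
  refine ⟨⟨extendOn φ y₀, extendOn φ.symm x₀, max r₁ r₂, mapsTo_extendOn φ y₀,
    mapsTo_extendOn φ.symm x₀, fun y hy => ?_, hr₁.mono (le_max_left _ _),
    hr₂.mono (le_max_right _ _)⟩⟩
  rw [extendOn_of_mem _ _ hy, extendOn_of_mem _ _ (φ.symm ⟨y, hy⟩).2]
  simp

namespace BlockConjugacy

variable {X : Set (ℤ → A)} {Y : Set (ℤ → B)} (D : BlockConjugacy X Y)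

/-- Only depends on the letters of `y` at positions `≤ 0`. -/
def pastImage (y : ℤ → B) : ℕ → A := fun k => D.g y (-D.r - k)

lemma eqOn_g_of_endsAtZero {w : List B} {y y' : ℤ → B} (hy : y ∈ Y) (hy' : y' ∈ Y)
    (hw : EndsAtZero w y) (hw' : EndsAtZero w y') :
    EqOn (D.g y) (D.g y') (Icc (1 - w.length + D.r) (-D.r)) :=
  D.isBlockCodeOn_g.eqOn hy hy' (fun _ hi => Icc_subset_Icc (by grind) (by grind)) (hw.eqOn hw')

/-- Splice the past of `g y` (up to `-r - (n - 1)`) with the future of `g y'` (from `-r` on);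
applying `f` produces a point ending with `v` whose future is that of `y'`. -/
lemma exists_endsAtZero_of_splice [TopologicalSpace A] (hX : IsSubshift X) {v : List B}
    (hn : 4 * D.r + 4 ≤ v.length) {y y' : ℤ → B} (hy : y ∈ Y) (hyv : EndsAtZero v y)
    (hy' : y' ∈ Y) (hy'v : EndsAtZero v.tail y') {x : ℤ → A} (hx : x ∈ X)
    (hxpast : EndsAtZero (wordOf (D.pastImage y) (v.length - 1)) x)
    (hxfut : ∀ k : ℕ, x k = D.g y' (k - D.r)) :
    ∃ u ∈ Y, EndsAtZero v u ∧ ∀ k : ℕ, u k = y' k := by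
  set n := v.length
  set r := D.r
  have hx' : shiftBy r x ∈ X := hX.shiftBy_mem _ hx
  have hpast : EqOn (shiftBy r x) (D.g y) (Icc (-(n - 1 : ℕ) - r) (-r)) := by
    intro t ht
    obtain ⟨k, hk, rfl⟩ : ∃ k : ℕ, k ≤ n - 1 ∧ t = -r - k :=
      ⟨(-r - t).toNat, by grind, by grind⟩
    rw [shiftBy_apply, show -(r : ℤ) - k + r = -k by ring]
    exact endsAtZero_wordOf_iff.1 hxpast k hk
  have hfut : EqOn (shiftBy r x) (D.g y') (Ici (-r)) := by
    intro t ht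
    obtain ⟨k, rfl⟩ : ∃ k : ℕ, t = k - r := ⟨(t + r).toNat, by grind⟩
    simpa using hxfut k
  have hgg : EqOn (D.g y) (D.g y') (Icc (2 - n + r) (-r)) := by
    have h := D.eqOn_g_of_endsAtZero hy hy' hyv.tail hy'v
    rwa [List.length_tail, Nat.cast_sub (by omega), Nat.cast_one,
      show (1 : ℤ) - (n - 1) = 2 - n by ring] at h
  have hglue : EqOn (shiftBy r x) (D.g y') (Ici (-3 * r)) := by
    intro t ht
    rcases le_or_gt t (-r) with htr | htr
    · exact (hpast ⟨by grind, htr⟩).trans (hgg ⟨by grind, htr⟩)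
    · exact hfut htr.le
  have hold : EqOn (D.f (shiftBy r x)) y (Icc (1 - n) (-2 * r - 1)) := by
    rw [← D.f_g y hy]
    exact D.isBlockCodeOn_f.eqOn hx' (D.mapsTo_g hy)
      (fun i hi => Icc_subset_Icc (by grind) (by grind)) hpast
  have hnew : EqOn (D.f (shiftBy r x)) y' (Ici (-2 * r)) := by
    rw [← D.f_g y' hy']
    exact D.isBlockCodeOn_f.eqOn hx' (D.mapsTo_g hy')
      (fun i hi t ht => by simp only [mem_Ici, mem_Icc] at hi ht ⊢; omega) hglue
  refine ⟨D.f (shiftBy r x), D.mapsTo_f hx', hyv.congr fun t ht => ?_,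
    fun k => hnew (by simp; omega)⟩
  rcases le_or_gt t (-2 * r - 1) with htr | htr
  · exact (hold ⟨ht.1, htr⟩).symm
  · rw [hnew (show -2 * (r : ℤ) ≤ t by omega), (hyv.tail.eqOn hy'v) ⟨?_, ht.2⟩]
    rw [List.length_tail]
    grind

theorem exists_isLeftConstraint_wordOf_pastImage [TopologicalSpace A] [TopologicalSpace B]
    (hX : IsSubshift X) (hY : IsSubshift Y) {v : List B} (hv : IsLeftConstraint Y v)
    (hn : 4 * D.r + 4 ≤ v.length) {y : ℤ → B} (hy : y ∈ Y) (hyv : EndsAtZero v y) :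
    ∃ j, 1 ≤ j ∧ j ≤ 2 * D.r + 1 ∧
      IsLeftConstraint X (wordOf (D.pastImage y) (v.length - 2 - 2 * D.r + j)) := by
  by_contra! hcon
  obtain ⟨y', hy', hy'v, hnot⟩ := hv.exists_mem_tail hY
  set n := v.length
  have hfol : fol X (wordOf (D.pastImage y) (n - 1)) =
      fol X (wordOf (D.pastImage y) (n - 2 - 2 * D.r)) := by
    rw [← fol_wordOf_add_eq hX (hX.shiftBy_mem (-D.r) (D.mapsTo_g hy))
      (fun k => by simp [pastImage]; ring_nf) hcon]
    congr 2
    omega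
  have hgg := D.eqOn_g_of_endsAtZero hy hy' hyv.tail hy'v
  rw [List.length_tail] at hgg
  have hz : (fun k : ℕ => D.g y' (k - D.r)) ∈ fol X (wordOf (D.pastImage y) (n - 1)) := by
    rw [hfol, fol_eq hX]
    refine ⟨shiftBy (-D.r) (D.g y'), hX.shiftBy_mem _ (D.mapsTo_g hy'),
      endsAtZero_wordOf_iff.2 fun k hk => ?_, fun k => by simp [sub_eq_add_neg]⟩
    rw [shiftBy_apply, pastImage, ← hgg ⟨by omega, by omega⟩]
    ring_nf
  rw [fol_eq hX] at hz
  obtain ⟨x, hx, hxpast, hxfut⟩ := hz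
  obtain ⟨u, hu, huv, hufut⟩ := D.exists_endsAtZero_of_splice hX hn hy hyv hy' hy'v hx hxpast
    fun k => (hxfut k).symm
  exact hnot u hu huv hufut

theorem exists_isExtendable_wordOf_pastImage [TopologicalSpace A] [TopologicalSpace B]
    [Finite B] [DiscreteTopology B] (hX : IsSubshift X) (hY : IsSubshift Y) {v : List B}
    (hv : IsExtendable Y v) (hn : 4 * D.r + 4 ≤ v.length) :
    ∃ y ∈ Y, EndsAtZero v y ∧ ∃ j, 1 ≤ j ∧ j ≤ 2 * D.r + 1 ∧
      IsExtendable X (wordOf (D.pastImage y) (v.length - 2 - 2 * D.r + j)) := by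
  obtain ⟨hvc, b, hbv, hb⟩ := hv
  obtain ⟨y, hy, hyb⟩ := exists_mem_forall_apply_neg_eq hY.1 fun m : ℕ => by
    obtain ⟨m', hm', hc⟩ := hb m
    obtain ⟨y, hy, hyw⟩ := hc.exists_mem hY
    exact ⟨y, hy, fun k hk => endsAtZero_wordOf_iff.1 hyw k (hk.trans hm')⟩
  have hyw : ∀ m, EndsAtZero (wordOf b m) y := fun m => endsAtZero_wordOf_iff.2 fun k _ => hyb k
  have hyv : EndsAtZero v y := hbv ▸ hyw _
  obtain ⟨j, hj1, hj2, hjc⟩ := D.exists_isLeftConstraint_wordOf_pastImage hX hY hvc hn hy hyv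
  refine ⟨y, hy, hyv, j, hj1, hj2, hjc, D.pastImage y, by rw [wordOf_length, Nat.add_sub_cancel],
    fun N => ?_⟩
  obtain ⟨m, hm, hmc⟩ := hb (N + 4 * D.r + 4)
  obtain ⟨j', -, -, hj'c⟩ := D.exists_isLeftConstraint_wordOf_pastImage hX hY hmc
    (by rw [wordOf_length]; omega) hy (hyw m)
  exact ⟨_, by rw [wordOf_length]; omega, hj'c⟩

lemma eqOn_of_wordOf_pastImage_eq {y y' : ℤ → B} (hy : y ∈ Y) (hy' : y' ∈ Y) {M : ℕ}
    (h : wordOf (D.pastImage y) M = wordOf (D.pastImage y') M) :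
    EqOn y y' (Icc (-M) (-2 * D.r)) := by
  have hg : EqOn (D.g y) (D.g y') (Icc (-D.r - M) (-D.r)) := by
    intro t ht
    obtain ⟨k, hk, rfl⟩ : ∃ k : ℕ, k ≤ M ∧ t = -D.r - k :=
      ⟨(-D.r - t).toNat, by grind, by grind⟩
    exact apply_eq_of_wordOf_eq h hk
  rw [← D.f_g y hy, ← D.f_g y' hy']
  exact D.isBlockCodeOn_f.eqOn (D.mapsTo_g hy) (D.mapsTo_g hy')
    (fun i hi => Icc_subset_Icc (by grind) (by grind)) hg

lemma eq_of_wordOf_pastImage_eq {v v' : List B} {y y' : ℤ → B} (hy : y ∈ Y) (hy' : y' ∈ Y)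
    (hv : EndsAtZero v y) (hv' : EndsAtZero v' y') (hlen : v.length = v'.length) {M M' : ℕ}
    (hM : v.length ≤ M + 2 * D.r + 2)
    (hpast : wordOf (D.pastImage y) M = wordOf (D.pastImage y') M')
    (htake : v.take (2 * D.r + 1) = v'.take (2 * D.r + 1))
    (hdrop : v.drop (v.length - (2 * D.r + 1)) = v'.drop (v.length - (2 * D.r + 1))) :
    v = v' := by
  obtain rfl : M = M' := by simpa [wordOf_length] using congrArg List.length hpast
  refine eq_of_take_eq_of_drop_eq hlen htake hdrop fun i hi hi' hia hib => ?_
  rw [← hv i hi, ← hv' i hi', hlen]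
  exact D.eqOn_of_wordOf_pastImage_eq hy hy' hpast ⟨by omega, by omega⟩

/-- A word `v` of `Y` is encoded by the word of `X` forced in the past of its image and by its
first and last `2r + 1` letters. -/
lemma card_le_sum_card_mul [Finite A] [Fintype B] {PY : List B → Prop} {PX : List A → Prop}
    (hP : ∀ v, PY v → 4 * D.r + 4 ≤ v.length → ∃ y ∈ Y, EndsAtZero v y ∧
      ∃ j, 1 ≤ j ∧ j ≤ 2 * D.r + 1 ∧ PX (wordOf (D.pastImage y) (v.length - 2 - 2 * D.r + j)))
    {n : ℕ} (hn : 4 * D.r + 4 ≤ n) :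
    Nat.card {v : List B | v.length = n ∧ PY v} ≤
      (∑ t ∈ Finset.range (2 * D.r + 2),
        Nat.card {w : List A | w.length = n - (2 * D.r + 1) + t ∧ PX w}) *
        Fintype.card B ^ (4 * D.r + 2) := by
  set r := D.r
  set s := {v : List B | v.length = n ∧ PY v}
  set S : ℕ → Set (List A) := fun t => {w | w.length = n - (2 * r + 1) + t ∧ PX w}
  set W := {l : List B | l.length = 2 * r + 1}
  have hP' : ∀ v ∈ s, ∃ y ∈ Y, EndsAtZero v y ∧ ∃ j, 1 ≤ j ∧ j ≤ 2 * r + 1 ∧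
      PX (wordOf (D.pastImage y) (n - 2 - 2 * r + j)) :=
    fun v hv => hv.1 ▸ hP v hv.2 (hv.1 ▸ hn)
  rcases s.eq_empty_or_nonempty with hs | ⟨v₀, hv₀⟩
  · simp [hs]
  have : Nonempty (ℤ → B) := let ⟨y₀, _⟩ := hP' v₀ hv₀; ⟨y₀⟩
  choose! y hy hyv j hj1 hj2 hPX using hP'
  set key : List B → List A × List B × List B := fun v =>
    (wordOf (D.pastImage (y v)) (n - 2 - 2 * r + j v), v.take (2 * r + 1), v.drop (n - (2 * r + 1)))
    with hkey
  have hmaps : ∀ v ∈ s, key v ∈ (⋃ t ∈ Finset.range (2 * r + 2), S t) ×ˢ W ×ˢ W := by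
    intro v hv
    have hvl : v.length = n := hv.1
    refine ⟨mem_iUnion₂.2 ⟨j v, by simp; grind, ?_, hPX v hv⟩, ?_, ?_⟩ <;>
      simp only [hkey, W, mem_ofPred_eq, wordOf_length, List.length_take, List.length_drop] <;>
      grind
  have hinj : InjOn key s := fun v hv v' hv' hkv => by
    simp only [hkey, Prod.mk.injEq] at hkv
    exact D.eq_of_wordOf_pastImage_eq (hy v hv) (hy v' hv') (hyv v hv) (hyv v' hv')
      (hv.1.trans hv'.1.symm) (by rw [hv.1]; grind) hkv.1 hkv.2.1 (by rw [hv.1]; exact hkv.2.2)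
  have hfin : ∀ t, (S t).Finite := fun t => (List.finite_length_eq A _).subset fun w hw => hw.1
  calc Nat.card s = s.ncard := Nat.card_coe_set_eq s
    _ ≤ ((⋃ t ∈ Finset.range (2 * r + 2), S t) ×ˢ W ×ˢ W).ncard :=
      ncard_le_ncard_of_injOn key hmaps hinj
        (((Finset.finite_toSet _).biUnion fun t _ => hfin t).prod
          ((List.finite_length_eq B _).prod (List.finite_length_eq B _)))
    _ ≤ (∑ t ∈ Finset.range (2 * r + 2), (S t).ncard) *
        (Fintype.card B ^ (2 * r + 1) * Fintype.card B ^ (2 * r + 1)) := by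
      rw [ncard_prod, ncard_prod, ncard_length_eq]
      gcongr
      exact Finset.set_ncard_biUnion_le _ _
    _ = _ := by
      rw [← pow_add, show 2 * r + 1 + (2 * r + 1) = 4 * r + 2 by ring]
      simp only [Nat.card_coe_set_eq, S]

theorem exists_card_le [Finite A] [Fintype B] {PY : List B → Prop} {PX : List A → Prop}
    (hP : ∀ v, PY v → 4 * D.r + 4 ≤ v.length → ∃ y ∈ Y, EndsAtZero v y ∧
      ∃ j, 1 ≤ j ∧ j ≤ 2 * D.r + 1 ∧ PX (wordOf (D.pastImage y) (v.length - 2 - 2 * D.r + j)))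
    {n : ℕ} (hn : 4 * D.r + 4 ≤ n) :
    ∃ m, n - (2 * D.r + 1) ≤ m ∧ m ≤ n ∧
      Nat.card {v : List B | v.length = n ∧ PY v} ≤
        (2 * D.r + 2) * Fintype.card B ^ (4 * D.r + 2) *
          Nat.card {w : List A | w.length = m ∧ PX w} := by
  obtain ⟨t₀, ht₀, hmax⟩ := Finset.exists_max_image (Finset.range (2 * D.r + 2))
    (fun t => Nat.card {w : List A | w.length = n - (2 * D.r + 1) + t ∧ PX w}) ⟨0, by simp⟩
  refine ⟨n - (2 * D.r + 1) + t₀, by omega, by simp at ht₀; omega, ?_⟩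
  calc _ ≤ _ := D.card_le_sum_card_mul hP hn
    _ ≤ (2 * D.r + 2) * Nat.card {w : List A | w.length = n - (2 * D.r + 1) + t₀ ∧ PX w} *
        Fintype.card B ^ (4 * D.r + 2) := by
      gcongr
      simpa using Finset.sum_le_card_nsmul _ _ _ hmax
    _ = _ := by ring

end BlockConjugacy

section Growth

open Real Topology

lemma limsup_le_limsup_of_le_add_comp {a b c : ℕ → ℝ} {m : ℕ → ℕ}
    (hm : Tendsto m atTop atTop) (hc : Tendsto c atTop (𝓝 0)) (ha : ∀ n, 0 ≤ a n)
    (hb₀ : ∀ n, 0 ≤ b n) (hb : BddAbove (range b)) (h : ∀ᶠ n in atTop, a n ≤ c n + b (m n)) :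
    limsup a atTop ≤ limsup b atTop := by
  have hbm : IsBoundedUnder (· ≤ ·) atTop (b ∘ m) :=
    (hb.mono (range_comp_subset_range m b)).isBoundedUnder_of_range
  calc limsup a atTop ≤ limsup (c + b ∘ m) atTop :=
        limsup_le_limsup h (isCoboundedUnder_le_of_le atTop ha)
          (isBoundedUnder_le_add hc.isBoundedUnder_le hbm)
    _ ≤ limsup c atTop + limsup (b ∘ m) atTop :=
        limsup_add_le hc.isBoundedUnder_ge hc.isBoundedUnder_le
          (isCoboundedUnder_le_of_le atTop fun n => hb₀ (m n)) hbm
    _ ≤ limsup b atTop := by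
        rw [hc.limsup_eq, zero_add]
        exact hm.limsup_comp_le_limsup (isCoboundedUnder_le_of_le _ hb₀)
          hb.isBoundedUnder_of_range

lemma posLog_natCast_div_le {x : ℕ} {C : ℝ} (m : ℕ) (hx : (x : ℝ) ≤ C ^ m) :
    log⁺ x / m ≤ log⁺ C :=
  div_le_of_le_mul₀ m.cast_nonneg posLog_nonneg <| by
    simpa [mul_comm] using posLog_le_posLog x.cast_nonneg hx

lemma posLog_div_le_of_le_mul {x y K : ℕ} {m n : ℕ} (hm : 0 < m) (hmn : m ≤ n)
    (h : y ≤ K * x) : log⁺ y / n ≤ Real.log K / n + log⁺ x / m := by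
  have hy : log⁺ (y : ℝ) ≤ Real.log K + log⁺ (x : ℝ) :=
    (posLog_le_posLog y.cast_nonneg (by exact_mod_cast h)).trans posLog_nat_mul
  calc log⁺ (y : ℝ) / n ≤ (Real.log K + log⁺ (x : ℝ)) / n := by gcongr
    _ = Real.log K / n + log⁺ (x : ℝ) / n := add_div _ _ _
    _ ≤ Real.log K / n + log⁺ (x : ℝ) / m := by
      gcongr
      exact posLog_nonneg

theorem limsup_posLog_div_le {cY cX : ℕ → ℕ} {C K w : ℕ} (hC : ∀ m, cX m ≤ C ^ m)
    (h : ∀ᶠ n in atTop, ∃ m, n - w ≤ m ∧ m ≤ n ∧ cY n ≤ K * cX m) :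
    limsup (fun n => log⁺ (cY n) / n) atTop ≤ limsup (fun n => log⁺ (cX n) / n) atTop := by
  obtain ⟨N, hN⟩ := eventually_atTop.1 h
  choose! m hm using hN
  have hb : ∀ k, log⁺ (cX k : ℝ) / k ≤ log⁺ (C : ℝ) :=
    fun k => posLog_natCast_div_le k (by exact_mod_cast hC k)
  refine limsup_le_limsup_of_le_add_comp (m := m) (c := fun n => Real.log K / n) ?_
    (tendsto_const_div_atTop_nhds_zero_nat _) (fun n => div_nonneg posLog_nonneg n.cast_nonneg)
    (fun n => div_nonneg posLog_nonneg n.cast_nonneg)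
    ⟨_, forall_mem_range.2 hb⟩ ?_
  · refine tendsto_atTop_mono' _ ?_ (tendsto_sub_atTop_nat w)
    filter_upwards [eventually_ge_atTop N] with n hn using (hm n hn).1
  · filter_upwards [eventually_ge_atTop (N + w + 1)] with n hn
    obtain ⟨hmw, hmn, hcard⟩ := hm n (by omega)
    exact posLog_div_le_of_le_mul (by omega) hmn hcard

end Growth

section Entropy

variable [TopologicalSpace A] [TopologicalSpace B] [DiscreteTopology A] [DiscreteTopology B]
  [Fintype A] [Fintype B] {X : Set (ℤ → A)} {Y : Set (ℤ → B)}

lemma Conjugate.eventually_card_le (hX : IsSubshift X) (hY : IsSubshift Y) (h : Conjugate X Y)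
    {PY : List B → Prop} {PX : List A → Prop} (hPY : ∀ v, PY v → IsLeftConstraint Y v)
    (hP : ∀ D : BlockConjugacy X Y, ∀ v, PY v → 4 * D.r + 4 ≤ v.length → ∃ y ∈ Y,
      EndsAtZero v y ∧ ∃ j, 1 ≤ j ∧ j ≤ 2 * D.r + 1 ∧
        PX (wordOf (D.pastImage y) (v.length - 2 - 2 * D.r + j))) :
    ∃ K w : ℕ, ∀ᶠ n in atTop, ∃ m, n - w ≤ m ∧ m ≤ n ∧
      Nat.card {v : List B | v.length = n ∧ PY v} ≤
        K * Nat.card {w : List A | w.length = m ∧ PX w} := by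
  -- A `BlockConjugacy` needs a point of `Y` to extend `φ` off `X`.
  rcases Y.eq_empty_or_nonempty with rfl | hY₀
  · refine ⟨0, 0, Eventually.of_forall fun n => ⟨n, by omega, le_rfl, ?_⟩⟩
    have : {v : List B | v.length = n ∧ PY v} = ∅ :=
      eq_empty_of_forall_notMem fun v hv => (hPY v hv.2).2.1 (by simp [fol])
    simp [this]
  obtain ⟨D⟩ := h.exists_blockConjugacy hX hY hY₀
  exact ⟨_, _, (eventually_ge_atTop _).mono fun n hn => D.exists_card_le (hP D) hn⟩

lemma hC_le_of_conjugate (hX : IsSubshift X) (hY : IsSubshift Y) (h : Conjugate X Y) :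
    hC Y ≤ hC X := by
  obtain ⟨K, w, hK⟩ := h.eventually_card_le hX hY (fun v hv => hv) fun D v hv hn => by
    obtain ⟨y, hy, hyv⟩ := hv.exists_mem hY
    exact ⟨y, hy, hyv, D.exists_isLeftConstraint_wordOf_pastImage hX hY hv hn hy hyv⟩
  exact limsup_posLog_div_le (card_words_le _) hK

lemma hCstar_le_of_conjugate (hX : IsSubshift X) (hY : IsSubshift Y) (h : Conjugate X Y) :
    hCstar Y ≤ hCstar X := by
  obtain ⟨K, w, hK⟩ := h.eventually_card_le hX hY (fun v hv => hv.1)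
    fun D v hv hn => D.exists_isExtendable_wordOf_pastImage hX hY hv hn
  simp only [hCstar, ← Real.log_of_nat_eq_posLog]
  exact limsup_posLog_div_le (card_words_le _) hK

lemma hC_eq_of_conjugate (hX : IsSubshift X) (hY : IsSubshift Y) (h : Conjugate X Y) :
    hC X = hC Y :=
  (hC_le_of_conjugate hY hX (h.symm hX)).antisymm (hC_le_of_conjugate hX hY h)

lemma hCstar_eq_of_conjugate (hX : IsSubshift X) (hY : IsSubshift Y) (h : Conjugate X Y) :
    hCstar X = hCstar Y :=
  (hCstar_le_of_conjugate hY hX (h.symm hX)).antisymm (hCstar_le_of_conjugate hX hY h)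

end Entropy

section Reversal

variable [TopologicalSpace A] [TopologicalSpace B] {X : Set (ℤ → A)} {Y : Set (ℤ → B)}

variable (A) in
def reverse : (ℤ → A) ≃ₜ (ℤ → A) where
  toFun x n := x (-n)
  invFun x n := x (-n)
  left_inv x := by simp
  right_inv x := by simp
  continuous_toFun := continuous_pi fun n => continuous_apply (-n)
  continuous_invFun := continuous_pi fun n => continuous_apply (-n)

lemma rev_eq_image (X : Set (ℤ → A)) : rev X = reverse A '' X := rfl

lemma reverse_eq_shift_reverse {x x' : ℤ → A} (h : x' = shift x) :
    reverse A x = shift (reverse A x') := by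
  funext n
  simp [reverse, h, shift]

lemma shift_comp_reverse : shift ∘ reverse A = reverse A ∘ shiftBy (-1) := by
  funext x n
  simp [reverse, shift]
  ring_nf

lemma IsSubshift.rev (hX : IsSubshift X) : IsSubshift (rev X) := by
  refine ⟨(reverse A).isClosedMap _ hX.1, ?_⟩
  rw [rev_eq_image, ← image_comp, shift_comp_reverse, image_comp, hX.image_shiftBy]

lemma Conjugate.rev (h : Conjugate X Y) : Conjugate (rev X) (rev Y) := by
  obtain ⟨φ, hφ⟩ := h
  refine ⟨((reverse A).image X).symm.trans (φ.trans ((reverse B).image Y)), fun x x' hxx' => ?_⟩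
  have hshift : (φ (((reverse A).image X).symm x) : ℤ → B) =
      shift (φ (((reverse A).image X).symm x')) :=
    hφ _ _ (reverse_eq_shift_reverse hxx')
  exact reverse_eq_shift_reverse hshift

end Reversal

/-- The left constraint entropy, the extendable left
constraint entropy, and their symmetric versions are invariants of topological
conjugacy of subshifts. -/
theorem constraint_entropy_conjugacy_invariant
    {A B : Type*} [Fintype A] [Fintype B]
    [TopologicalSpace A] [TopologicalSpace B]
    [DiscreteTopology A] [DiscreteTopology B]
    (X : Set (ℤ → A)) (Y : Set (ℤ → B))
    (hX : IsSubshift X) (hY : IsSubshift Y) (h : Conjugate X Y) :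
    hC X = hC Y ∧ hCstar X = hCstar Y ∧
    hSC X = hSC Y ∧ hSCstar X = hSCstar Y := by
  have hC_eq := hC_eq_of_conjugate hX hY h
  have hCstar_eq := hCstar_eq_of_conjugate hX hY h
  have hC_rev := hC_eq_of_conjugate hX.rev hY.rev h.rev
  have hCstar_rev := hCstar_eq_of_conjugate hX.rev hY.rev h.rev
  exact ⟨hC_eq, hCstar_eq, by rw [hSC, hSC, hC_eq, hC_rev],
    by rw [hSCstar, hSCstar, hCstar_eq, hCstar_rev]⟩

end QFTPaper
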